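/- The similarity relation is in general not transitive: with L having a single binary relation symbol R, let A be the structure on the two-element set {a, a'} with R holding exactly of the pair (a, a'); let B be the structure on {b, b'} with R holding exactly of (b, b') and (b', b); and let C be the structure on {c, c'} with R holding exactly of (c', c). Then (A,B) ⊨ a ≲ b and (B,C) ⊨ b ≲ c, whereas (A,C) ⊨ a ≴ c; in particular, c-Type_{(A,C)}(a ≲ c) is strictly contained in c-Type_{(A,C)}(a ≲ c'). -/

import Mathlib

/-!
`B` has an automorphism swapping `b` and `b'`, so both have the same conjunctive type and
`a ≲ b` holds for want of competitors. The conjunctive formula `∃ x, R(x, y)` holds of `b` and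
`c` but not of `c'`, which gives `b ≲ c`. Finally `C ≅ A` via `c' ↦ a`, so
`c-Type_{(A,C)}(a ≲ c') = c-Type_A(a)` contains `c-Type_{(A,C)}(a ≲ c)`, and strictly so since
`∃ x, R(y, x)` holds of `a` and `c'` but not of `c`.
-/

open FirstOrder FirstOrder.Language

universe u v w x

namespace Similarity

variable {L : FirstOrder.Language.{u, v}}

/-- An `L`-formula in one designated free variable `y` is *conjunctive* iff it is built from
literals (equalities, disequalities, relation atoms and negated relation atoms) using only
conjunction and the quantifiers `∀` and `∃`; in particular it contains no disjunctions and
negation occurs only directly in front of atomic formulas. -/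
inductive IsConjunctive : ∀ {n : ℕ}, L.BoundedFormula (Fin 1) n → Prop
  | equal {n} (t u : L.Term (Fin 1 ⊕ Fin n)) : IsConjunctive (BoundedFormula.equal t u)
  | nequal {n} (t u : L.Term (Fin 1 ⊕ Fin n)) : IsConjunctive (BoundedFormula.equal t u).not
  | rel {n l} (R : L.Relations l) (ts : Fin l → L.Term (Fin 1 ⊕ Fin n)) :
      IsConjunctive (BoundedFormula.rel R ts)
  | nrel {n l} (R : L.Relations l) (ts : Fin l → L.Term (Fin 1 ⊕ Fin n)) :
      IsConjunctive (BoundedFormula.rel R ts).not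
  | inf {n} {φ ψ : L.BoundedFormula (Fin 1) n} :
      IsConjunctive φ → IsConjunctive ψ → IsConjunctive (φ ⊓ ψ)
  | all {n} {φ : L.BoundedFormula (Fin 1) (n + 1)} : IsConjunctive φ → IsConjunctive φ.all
  | ex {n} {φ : L.BoundedFormula (Fin 1) (n + 1)} : IsConjunctive φ → IsConjunctive φ.ex

/-- The conjunctive type `c-Type_A(a)` of an element `a` in an `L`-structure `A`:
the set of conjunctive `L`-formulas `φ(y)` such that `A ⊨ φ(a)`. -/
def cType {M : Type w} (S : L.Structure M) (a : M) : Set (L.Formula (Fin 1)) :=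
  { φ | IsConjunctive φ ∧ @Formula.Realize L M S (Fin 1) φ (fun _ => a) }

/-- The set of justifications `c-Type_{(A,B)}(a ≲ b) := c-Type_A(a) ∩ c-Type_B(b)`. -/
def Just {M : Type w} {N : Type x} (SA : L.Structure M) (SB : L.Structure N)
    (a : M) (b : N) : Set (L.Formula (Fin 1)) :=
  cType SA a ∩ cType SB b

/-- `(A,B) ⊨ a ≲ b` for structures `A`, `B` whose domains are (possibly distinct) types
`M`, `N`, so that `a : M` is not an element of `B` and the exclusion clause
"except for `a` in case `a ∈ B`" is vacuous: there is no `b' : N` such that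
`c-Type_A(a) ∩ c-Type_B(b)` is strictly contained in `c-Type_A(a) ∩ c-Type_B(b')`. -/
def Lesssim {M : Type w} {N : Type x} (SA : L.Structure M) (SB : L.Structure N)
    (a : M) (b : N) : Prop :=
  ¬ ∃ b' : N, Just SA SB a b ⊂ Just SA SB a b'

/-- `(A,B) ⊨ a ≈ b` iff `(A,B) ⊨ a ≲ b` and `(B,A) ⊨ b ≲ a`. -/
def Approx {M : Type w} {N : Type x} (SA : L.Structure M) (SB : L.Structure N)
    (a : M) (b : N) : Prop :=
  Lesssim SA SB a b ∧ Lesssim SB SA b a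

end Similarity

/-- The first-order language with a single binary relation symbol `R`. -/
def LR : FirstOrder.Language :=
  ⟨fun _ => Empty, fun n => match n with | 2 => PUnit | _ => Empty⟩

/-- The two-element domain `{a, a'}` of the structure `A`. -/
inductive DomA | a | a'

/-- The two-element domain `{b, b'}` of the structure `B`. -/
inductive DomB | b | b'

/-- The two-element domain `{c, c'}` of the structure `C`. -/
inductive DomC | c | c'

/-- The structure `A` on `{a, a'}` with `R` holding exactly of the pair `(a, a')`. -/
def SA : LR.Structure DomA where
  funMap {n} f _ := f.elim
  RelMap {n} r xs := match n, r with | 2, _ => xs 0 = DomA.a ∧ xs 1 = DomA.a'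

/-- The structure `B` on `{b, b'}` with `R` holding exactly of `(b, b')` and `(b', b)`. -/
def SB : LR.Structure DomB where
  funMap {n} f _ := f.elim
  RelMap {n} r xs :=
    match n, r with
    | 2, _ => (xs 0 = DomB.b ∧ xs 1 = DomB.b') ∨ (xs 0 = DomB.b' ∧ xs 1 = DomB.b)

/-- The structure `C` on `{c, c'}` with `R` holding exactly of the pair `(c', c)`. -/
def SC : LR.Structure DomC where
  funMap {n} f _ := f.elim
  RelMap {n} r xs := match n, r with | 2, _ => xs 0 = DomC.c' ∧ xs 1 = DomC.c

namespace Similarity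

variable {L : Language} {M N : Type*} [SM : L.Structure M] [SN : L.Structure N]

theorem cType_equiv_apply (e : M ≃[L] N) (a : M) : cType SN (e a) = cType SM a := by
  ext φ
  exact and_congr_right' (StrongHomClass.realize_formula e φ (v := fun _ => a))

theorem just_subset_of_cType_subset {a : M} {b b' : N} (h : cType SM a ⊆ cType SN b') :
    Just SM SN a b ⊆ Just SM SN a b' :=
  fun _ hφ => ⟨hφ.1, h hφ.1⟩

theorem not_just_subset_of_mem {a : M} {b b' : N} {φ : L.Formula (Fin 1)}
    (hφ : φ ∈ Just SM SN a b) (hφ' : φ ∉ cType SN b') : ¬ Just SM SN a b ⊆ Just SM SN a b' :=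
  fun h => hφ' (h hφ).2

theorem lesssim_of_forall_cType_eq {a : M} {b : N} (h : ∀ b', cType SN b' = cType SN b) :
    Lesssim SM SN a b := by
  rintro ⟨b', hb'⟩
  simp only [Just, h b', lt_self_iff_false] at hb'

/-- `∃ x, R(y, x)`. -/
def hasSucc (R : L.Relations 2) : L.Formula (Fin 1) :=
  (BoundedFormula.rel R ![Term.var (Sum.inl 0), Term.var (Sum.inr 0)] :
    L.BoundedFormula (Fin 1) 1).ex

/-- `∃ x, R(x, y)`. -/
def hasPred (R : L.Relations 2) : L.Formula (Fin 1) :=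
  (BoundedFormula.rel R ![Term.var (Sum.inr 0), Term.var (Sum.inl 0)] :
    L.BoundedFormula (Fin 1) 1).ex

theorem hasSucc_mem_cType (R : L.Relations 2) (a : M) :
    hasSucc R ∈ cType SM a ↔ ∃ x, Structure.RelMap R ![a, x] := by
  rw [cType, Set.mem_ofPred, and_iff_right (show IsConjunctive (hasSucc R) from .ex (.rel _ _)),
    hasSucc, Formula.Realize, BoundedFormula.realize_ex]
  refine exists_congr fun x => ?_
  change Structure.RelMap R _ ↔ _
  exact iff_of_eq (congrArg _ (funext fun i => by fin_cases i <;> rfl))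

theorem hasPred_mem_cType (R : L.Relations 2) (a : M) :
    hasPred R ∈ cType SM a ↔ ∃ x, Structure.RelMap R ![x, a] := by
  rw [cType, Set.mem_ofPred, and_iff_right (show IsConjunctive (hasPred R) from .ex (.rel _ _)),
    hasPred, Formula.Realize, BoundedFormula.realize_ex]
  refine exists_congr fun x => ?_
  change Structure.RelMap R _ ↔ _
  exact iff_of_eq (congrArg _ (funext fun i => by fin_cases i <;> rfl))

end Similarity

def LR.R : LR.Relations 2 := PUnit.unit

attribute [local instance] SA SB SC

def DomB.swap : DomB ≃[LR] DomB where
  toFun := fun | .b => .b' | .b' => .b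
  invFun := fun | .b => .b' | .b' => .b
  left_inv x := by cases x <;> rfl
  right_inv x := by cases x <;> rfl
  map_fun' f := f.elim
  map_rel' {n} r x := by
    match n, r with
    | 2, _ =>
      change (_ ∧ _ ∨ _ ∧ _) ↔ (_ ∧ _ ∨ _ ∧ _)
      rcases h0 : x 0 <;> rcases h1 : x 1 <;> simp [h0, h1]

def DomC.equivDomA : DomC ≃[LR] DomA where
  toFun := fun | .c => .a' | .c' => .a
  invFun := fun | .a => .c' | .a' => .c
  left_inv x := by cases x <;> rfl
  right_inv x := by cases x <;> rfl
  map_fun' f := f.elim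
  map_rel' {n} r x := by
    match n, r with
    | 2, _ =>
      change (_ ∧ _) ↔ (_ ∧ _)
      rcases h0 : x 0 <;> rcases h1 : x 1 <;> simp [h0, h1]

open Similarity

theorem cType_b'_eq_cType_b : cType SB DomB.b' = cType SB DomB.b :=
  cType_equiv_apply DomB.swap DomB.b

theorem cType_c'_eq_cType_a : cType SC DomC.c' = cType SA DomA.a :=
  (cType_equiv_apply DomC.equivDomA DomC.c').symm

theorem hasSucc_mem_cType_a : hasSucc LR.R ∈ cType SA DomA.a :=
  (hasSucc_mem_cType _ _).2 ⟨DomA.a', rfl, rfl⟩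

theorem hasSucc_mem_cType_c' : hasSucc LR.R ∈ cType SC DomC.c' :=
  (hasSucc_mem_cType _ _).2 ⟨DomC.c, rfl, rfl⟩

theorem hasSucc_not_mem_cType_c : hasSucc LR.R ∉ cType SC DomC.c :=
  fun h => by obtain ⟨_, ⟨⟩, _⟩ := (hasSucc_mem_cType _ _).1 h

theorem hasPred_mem_cType_b : hasPred LR.R ∈ cType SB DomB.b :=
  (hasPred_mem_cType _ _).2 ⟨DomB.b', .inr ⟨rfl, rfl⟩⟩

theorem hasPred_mem_cType_c : hasPred LR.R ∈ cType SC DomC.c :=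
  (hasPred_mem_cType _ _).2 ⟨DomC.c', rfl, rfl⟩

theorem hasPred_not_mem_cType_c' : hasPred LR.R ∉ cType SC DomC.c' :=
  fun h => by obtain ⟨_, _, ⟨⟩⟩ := (hasPred_mem_cType _ _).1 h

open Similarity in
/-- The similarity relation is in general not transitive: `(A,B) ⊨ a ≲ b` and
`(B,C) ⊨ b ≲ c`, whereas `(A,C) ⊨ a ≴ c`; in particular, `c-Type_{(A,C)}(a ≲ c)` is
strictly contained in `c-Type_{(A,C)}(a ≲ c')`. -/
theorem similarity_not_transitive :
    Lesssim SA SB DomA.a DomB.b ∧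
      Lesssim SB SC DomB.b DomC.c ∧
      ¬ Lesssim SA SC DomA.a DomC.c ∧
      Just SA SC DomA.a DomC.c ⊂ Just SA SC DomA.a DomC.c' := by
  have hac : Just SA SC DomA.a DomC.c ⊂ Just SA SC DomA.a DomC.c' :=
    ssubset_of_subset_not_subset (just_subset_of_cType_subset cType_c'_eq_cType_a.ge)
      (not_just_subset_of_mem ⟨hasSucc_mem_cType_a, hasSucc_mem_cType_c'⟩ hasSucc_not_mem_cType_c)
  refine ⟨lesssim_of_forall_cType_eq ?_, ?_, fun h => h ⟨DomC.c', hac⟩, hac⟩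
  · rintro (_ | _)
    exacts [rfl, cType_b'_eq_cType_b]
  · rintro ⟨_ | _, hc⟩
    exacts [hc.ne rfl, not_just_subset_of_mem ⟨hasPred_mem_cType_b, hasPred_mem_cType_c⟩
      hasPred_not_mem_cType_c' hc.subset]
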